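/- arXiv:2010.04227 — 7 statements merged into one kernel-verified Lean document; each statement's English description precedes it below -/
import Mathlib

section
/- Let ν* be an equilibrium measure for G and let S* = {x ∈ X : ν*(x) > 0} be its support. Then G(x,ν*) = Γ(G) for every x ∈ S*. -/
open Finset

/-- If ν* is an equilibrium measure for the symmetric matrix `G` and
`S* = {x : ν* x > 0}` is its support, then `G(x,ν*) = Γ(G) = G(ν*,ν*)` for every `x ∈ S*`. -/
theorem frostman_equality_on_support {X : Type*} [Fintype X] [Nonempty X]
    (G : X → X → ℝ) (hGsym : ∀ x y, G x y = G y x)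
    (νs : X → ℝ) (hνs_nonneg : ∀ x, 0 ≤ νs x) (hνs_sum : ∑ x, νs x = 1)
    (hmin : ∀ ν : X → ℝ, (∀ x, 0 ≤ ν x) → ∑ x, ν x = 1 →
      ∑ x, ∑ y, νs x * G x y * νs y ≤ ∑ x, ∑ y, ν x * G x y * ν y) :
    ∀ x : X, 0 < νs x → ∑ y, G x y * νs y = ∑ x', ∑ y, νs x' * G x' y * νs y := by
  classical
  set Γ : ℝ := ∑ x', ∑ y, νs x' * G x' y * νs y with hΓ
  -- Key: Γ ≤ G(x, ν*) for all x
  have key : ∀ x : X, Γ ≤ ∑ y, G x y * νs y := by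
    intro x
    by_contra hc
    push_neg at hc
    set A : ℝ := ∑ y, G x y * νs y with hA
    set B : ℝ := G x x with hB
    set C : ℝ := |Γ - 2*A + B| + 1 with hC
    have hCpos : 0 < C := by positivity
    set t : ℝ := min 1 ((Γ - A)/C) with ht
    have ht0 : 0 < t := by
      apply lt_min one_pos
      exact div_pos (by linarith) hCpos
    have ht1 : t ≤ 1 := min_le_left _ _
    have htC : t * C ≤ Γ - A := by
      have : t ≤ (Γ - A)/C := min_le_right _ _
      calc t * C ≤ ((Γ - A)/C) * C := by nlinarith
        _ = Γ - A := by field_simp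
    set ν : X → ℝ := fun y => (1-t) * νs y + t * (if y = x then 1 else 0) with hν
    have hνnn : ∀ y, 0 ≤ ν y := by
      intro y
      have h1 := hνs_nonneg y
      simp only [hν]
      by_cases h : y = x
      · subst h
        rw [if_pos rfl, mul_one]
        nlinarith
      · simp only [if_neg h, mul_zero, add_zero]
        nlinarith
    have hνsum : ∑ y, ν y = 1 := by
      simp only [hν]
      rw [Finset.sum_add_distrib, ← Finset.mul_sum, ← Finset.mul_sum, hνs_sum]
      simp
    have hAx : ∑ a, νs a * G a x = A := by
      rw [hA]
      apply Finset.sum_congr rfl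
      intro a _
      rw [hGsym a x]; ring
    have hexp : ∑ a, ∑ b, ν a * G a b * ν b
        = (1-t)^2 * Γ + t*(1-t)*A + t*(1-t)*A + t^2 * B := by
      have hterm : ∀ a b, ν a * G a b * ν b
          = (1-t)^2 * (νs a * G a b * νs b)
            + t*(1-t) * ((if a = x then 1 else 0) * (G a b * νs b))
            + t*(1-t) * (νs a * G a b * (if b = x then 1 else 0))
            + t^2 * ((if a = x then 1 else 0) * ((if b = x then 1 else 0) * G a b)) := by
        intro a b; simp only [hν]; ring
      have e1 : ∑ a, ∑ b, ν a * G a b * ν b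
          = (1-t)^2 * (∑ a, ∑ b, νs a * G a b * νs b)
            + t*(1-t) * (∑ a, ∑ b, (if a = x then (1:ℝ) else 0) * (G a b * νs b))
            + t*(1-t) * (∑ a, ∑ b, νs a * G a b * (if b = x then (1:ℝ) else 0))
            + t^2 * (∑ a, ∑ b, (if a = x then (1:ℝ) else 0) * ((if b = x then (1:ℝ) else 0) * G a b)) := by
        simp_rw [Finset.mul_sum, ← Finset.sum_add_distrib]
        refine Finset.sum_congr rfl fun a _ => Finset.sum_congr rfl fun b _ => ?_
        exact hterm a b
      have h1 : ∑ a, ∑ b, (if a = x then (1:ℝ) else 0) * (G a b * νs b) = A := by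
        have : ∀ a : X, ∑ b, (if a = x then (1:ℝ) else 0) * (G a b * νs b)
            = if a = x then A else 0 := by
          intro a
          by_cases h : a = x <;> simp [h, hA]
        simp_rw [this]
        simp
      have h2 : ∑ a, ∑ b, νs a * G a b * (if b = x then (1:ℝ) else 0) = A := by
        have : ∀ a : X, ∑ b, νs a * G a b * (if b = x then (1:ℝ) else 0)
            = νs a * G a x := by
          intro a
          simp_rw [mul_ite, mul_one, mul_zero]
          rw [Finset.sum_ite_eq' Finset.univ x (fun b => νs a * G a b)]
          simp
        simp_rw [this]; exact hAx
      have h3 : ∑ a, ∑ b, (if a = x then (1:ℝ) else 0) * ((if b = x then (1:ℝ) else 0) * G a b) = B := by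
        have : ∀ a : X, ∑ b, (if a = x then (1:ℝ) else 0) * ((if b = x then (1:ℝ) else 0) * G a b)
            = if a = x then G a x else 0 := by
          intro a
          by_cases h : a = x <;> simp [h, Finset.sum_ite_eq']
        simp_rw [this]
        simp [hB]
      rw [e1, h1, h2, h3, ← hΓ]
    have hineq := hmin ν hνnn hνsum
    rw [hexp] at hineq
    -- Γ ≤ (1-t)^2 Γ + 2t(1-t)A + t^2 B
    -- ⇒ 0 ≤ t(2(A-Γ) + t(Γ-2A+B))
    have h4 : 0 ≤ 2*(A - Γ) + t*(Γ - 2*A + B) := by nlinarith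
    have h5 : t*(Γ - 2*A + B) ≤ t * C := by
      have habs : Γ - 2*A + B ≤ |Γ - 2*A + B| := le_abs_self _
      nlinarith
    linarith
  -- Now sum: ∑ νs x * (G(x,ν*) - Γ) = 0, terms nonneg, so each zero.
  have hsum0 : ∑ x, νs x * ((∑ y, G x y * νs y) - Γ) = 0 := by
    simp_rw [mul_sub, Finset.sum_sub_distrib, ← Finset.sum_mul, hνs_sum, one_mul]
    have : ∑ x, νs x * ∑ y, G x y * νs y = Γ := by
      rw [hΓ]
      apply Finset.sum_congr rfl
      intro a _
      rw [Finset.mul_sum]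
      apply Finset.sum_congr rfl
      intro b _; ring
    rw [this]; ring
  have hnn : ∀ x ∈ Finset.univ, 0 ≤ νs x * ((∑ y, G x y * νs y) - Γ) := by
    intro x _
    exact mul_nonneg (hνs_nonneg x) (by linarith [key x])
  intro x hx
  have := (Finset.sum_eq_zero_iff_of_nonneg hnn).mp hsum0 x (Finset.mem_univ x)
  rcases mul_eq_zero.mp this with h | h
  · linarith
  · linarith
end

section
/- Assume G is conditionally positive semi-definite. Let c ∈ ℝ and let μ ∈ P, with support S = {x ∈ X : μ(x) > 0}, satisfy G(x,μ) ≥ c for all x ∈ X and G(x,μ) = c for all x ∈ S. Then c = Γ(G) and μ is an equilibrium measure for G, i.e. G(μ,μ) = Γ(G). -/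
open Finset

/-- Let `G` be symmetric and conditionally positive semi-definite. If `c ∈ ℝ`
and `μ` is a probability measure with support `S = {x : μ x > 0}` satisfying
`G(x,μ) ≥ c` for all `x` and `G(x,μ) = c` for `x ∈ S`, then `G(μ,μ) = c`, `μ` is an
equilibrium measure (its energy is ≤ that of every probability measure), and hence
`c = Γ(G)`. -/
theorem frostman_converse {X : Type*} [Fintype X] [Nonempty X]
    (G : X → X → ℝ) (hGsym : ∀ x y, G x y = G y x)
    (hcpsd : ∀ v : X → ℝ, ∑ x, v x = 0 → 0 ≤ ∑ x, ∑ y, v x * G x y * v y)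
    (c : ℝ) (μ : X → ℝ) (hμ_nonneg : ∀ x, 0 ≤ μ x) (hμ_sum : ∑ x, μ x = 1)
    (hlow : ∀ x : X, c ≤ ∑ y, G x y * μ y)
    (heq : ∀ x : X, 0 < μ x → ∑ y, G x y * μ y = c) :
    (∑ x, ∑ y, μ x * G x y * μ y = c) ∧
      (∀ ν : X → ℝ, (∀ x, 0 ≤ ν x) → ∑ x, ν x = 1 →
        ∑ x, ∑ y, μ x * G x y * μ y ≤ ∑ x, ∑ y, ν x * G x y * ν y) := by
  -- cross energy lower bound
  have cross : ∀ ν : X → ℝ, (∀ x, 0 ≤ ν x) → ∑ x, ν x = 1 →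
      c ≤ ∑ x, ∑ y, ν x * G x y * μ y := by
    intro ν hν hνs
    calc c = ∑ x, ν x * c := by rw [← Finset.sum_mul, hνs, one_mul]
    _ ≤ ∑ x, ν x * ∑ y, G x y * μ y := by
        apply Finset.sum_le_sum
        intro x _
        exact mul_le_mul_of_nonneg_left (hlow x) (hν x)
    _ = ∑ x, ∑ y, ν x * G x y * μ y := by
        apply Finset.sum_congr rfl
        intro x _
        rw [Finset.mul_sum]
        apply Finset.sum_congr rfl
        intro y _
        ring
  have Eμ : ∑ x, ∑ y, μ x * G x y * μ y = c := by
    have : ∀ x : X, ∑ y, μ x * G x y * μ y = μ x * c := by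
      intro x
      rcases eq_or_lt_of_le (hμ_nonneg x) with h | h
      · simp [← h]
      · have h2 : ∑ y, μ x * G x y * μ y = μ x * ∑ y, G x y * μ y := by
          rw [Finset.mul_sum]
          exact Finset.sum_congr rfl fun y _ => by ring
        rw [h2, heq x h]
    simp only [this, ← Finset.sum_mul, hμ_sum, one_mul]
  refine ⟨Eμ, ?_⟩
  intro ν hν hνs
  have hv : ∑ x, (ν x - μ x) = 0 := by
    rw [Finset.sum_sub_distrib, hμ_sum, hνs, sub_self]
  have key := hcpsd (fun x => ν x - μ x) hv
  have expand : ∑ x, ∑ y, (ν x - μ x) * G x y * (ν y - μ y)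
      = ∑ x, ∑ y, ν x * G x y * ν y - ∑ x, ∑ y, ν x * G x y * μ y
        - ∑ x, ∑ y, μ x * G x y * ν y + ∑ x, ∑ y, μ x * G x y * μ y := by
    simp only [← Finset.sum_sub_distrib, ← Finset.sum_add_distrib]
    apply Finset.sum_congr rfl; intro x _
    apply Finset.sum_congr rfl; intro y _
    ring
  have hsymsum : ∑ x, ∑ y, μ x * G x y * ν y = ∑ x, ∑ y, ν x * G x y * μ y := by
    rw [Finset.sum_comm]
    apply Finset.sum_congr rfl; intro x _
    apply Finset.sum_congr rfl; intro y _
    rw [hGsym y x]; ring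
  rw [expand, hsymsum, Eμ] at key
  have hc := cross ν hν hνs
  rw [Eμ]
  linarith
end

section
/- Assume G is conditionally positive semi-definite. Let c ∈ ℝ and let μ ∈ P, with support S = {x ∈ X : μ(x) > 0}, satisfy G(x,μ) ≥ c for all x ∈ X and G(x,μ) = c for all x ∈ S. Then for any equilibrium measure ν* of G, the vector μ − ν* lies in the null space of G, i.e. ∑_{y∈X} G(x,y)(μ(y) − ν*(y)) = 0 for every x ∈ X. -/
open Finset

private lemma dsum_mul {X : Type*} [Fintype X] (G : X → X → ℝ) (a b : X → ℝ) :
    ∑ x, ∑ y, a x * G x y * b y = ∑ x, a x * ∑ y, G x y * b y := by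
  refine Finset.sum_congr rfl fun x _ => ?_
  rw [Finset.mul_sum]
  exact Finset.sum_congr rfl fun y _ => by ring

private lemma dsum_symm {X : Type*} [Fintype X] (G : X → X → ℝ)
    (hGsym : ∀ x y, G x y = G y x) (a b : X → ℝ) :
    ∑ x, ∑ y, a x * G x y * b y = ∑ x, ∑ y, b x * G x y * a y := by
  rw [Finset.sum_comm]
  refine Finset.sum_congr rfl fun x _ => Finset.sum_congr rfl fun y _ => ?_
  rw [hGsym y x]; ring

private lemma dsum_expand {X : Type*} [Fintype X] (G : X → X → ℝ) (v w : X → ℝ) (t : ℝ) :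
    ∑ x, ∑ y, (v x + t * w x) * G x y * (v y + t * w y)
      = (∑ x, ∑ y, v x * G x y * v y)
        + t * (∑ x, ∑ y, v x * G x y * w y) + t * (∑ x, ∑ y, w x * G x y * v y)
        + t ^ 2 * (∑ x, ∑ y, w x * G x y * w y) := by
  have h : ∀ x y, (v x + t * w x) * G x y * (v y + t * w y)
      = v x * G x y * v y + t * (v x * G x y * w y) + t * (w x * G x y * v y)
        + t ^ 2 * (w x * G x y * w y) := fun x y => by ring
  simp only [h, Finset.sum_add_distrib, Finset.mul_sum]

private lemma dsum_expand_sub {X : Type*} [Fintype X] (G : X → X → ℝ) (v w : X → ℝ) :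
    ∑ x, ∑ y, (v x - w x) * G x y * (v y - w y)
      = (∑ x, ∑ y, v x * G x y * v y)
        - (∑ x, ∑ y, v x * G x y * w y) - (∑ x, ∑ y, w x * G x y * v y)
        + (∑ x, ∑ y, w x * G x y * w y) := by
  have h : ∀ x y, (v x - w x) * G x y * (v y - w y)
      = v x * G x y * v y - v x * G x y * w y - w x * G x y * v y
        + w x * G x y * w y := fun x y => by ring
  simp only [h, Finset.sum_add_distrib, Finset.sum_sub_distrib]

/-- Let `G` be symmetric and conditionally positive semi-definite, and let
`μ` be a probability measure with support `S = {x : μ x > 0}` satisfying `G(x,μ) ≥ c`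
for all `x` and `G(x,μ) = c` on `S`. Then for any equilibrium measure `ν*` of `G`,
the vector `μ − ν*` lies in the null space of `G`. -/
theorem frostman_null_space {X : Type*} [Fintype X] [Nonempty X]
    (G : X → X → ℝ) (hGsym : ∀ x y, G x y = G y x)
    (hcpsd : ∀ v : X → ℝ, ∑ x, v x = 0 → 0 ≤ ∑ x, ∑ y, v x * G x y * v y)
    (c : ℝ) (μ : X → ℝ) (hμ_nonneg : ∀ x, 0 ≤ μ x) (hμ_sum : ∑ x, μ x = 1)
    (hlow : ∀ x : X, c ≤ ∑ y, G x y * μ y)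
    (heq : ∀ x : X, 0 < μ x → ∑ y, G x y * μ y = c)
    (νs : X → ℝ) (hνs_nonneg : ∀ x, 0 ≤ νs x) (hνs_sum : ∑ x, νs x = 1)
    (hmin : ∀ ν : X → ℝ, (∀ x, 0 ≤ ν x) → ∑ x, ν x = 1 →
      ∑ x, ∑ y, νs x * G x y * νs y ≤ ∑ x, ∑ y, ν x * G x y * ν y) :
    ∀ x : X, ∑ y, G x y * (μ y - νs y) = 0 := by
  classical
  set v : X → ℝ := fun z => μ z - νs z with hv_def
  have hvsum : ∑ z, v z = 0 := by
    simp [hv_def, Finset.sum_sub_distrib, hμ_sum, hνs_sum]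
  -- G(μ,μ) = c
  have hQμ : ∑ x, ∑ y, μ x * G x y * μ y = c := by
    rw [dsum_mul]
    have h1 : ∀ x ∈ Finset.univ, μ x * ∑ y, G x y * μ y = μ x * c := by
      intro x _
      rcases (hμ_nonneg x).eq_or_lt with h | h
      · rw [← h]; ring
      · rw [heq x h]
    rw [Finset.sum_congr rfl h1, ← Finset.sum_mul, hμ_sum, one_mul]
  -- G(νs,μ) ≥ c
  have hBνμ : c ≤ ∑ x, ∑ y, νs x * G x y * μ y := by
    rw [dsum_mul]
    calc c = ∑ x, νs x * c := by rw [← Finset.sum_mul, hνs_sum, one_mul]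
      _ ≤ ∑ x, νs x * ∑ y, G x y * μ y :=
          Finset.sum_le_sum fun x _ => mul_le_mul_of_nonneg_left (hlow x) (hνs_nonneg x)
  -- G(νs,νs) ≤ c
  have hQν : ∑ x, ∑ y, νs x * G x y * νs y ≤ c := by
    have := hmin μ hμ_nonneg hμ_sum
    rw [hQμ] at this
    exact this
  -- Q(v) = 0
  have hsymm : ∑ x, ∑ y, μ x * G x y * νs y = ∑ x, ∑ y, νs x * G x y * μ y :=
    dsum_symm G hGsym μ νs
  have hQv0 : ∑ x, ∑ y, v x * G x y * v y = 0 := by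
    have hle : ∑ x, ∑ y, v x * G x y * v y ≤ 0 := by
      have hexp := dsum_expand_sub G μ νs
      have : ∑ x, ∑ y, v x * G x y * v y
          = (∑ x, ∑ y, μ x * G x y * μ y)
            - (∑ x, ∑ y, μ x * G x y * νs y) - (∑ x, ∑ y, νs x * G x y * μ y)
            + (∑ x, ∑ y, νs x * G x y * νs y) := hexp
      rw [this, hQμ, hsymm]
      linarith
    exact le_antisymm hle (hcpsd v hvsum)
  -- B(v, w) = 0 for every zero-sum w
  have key : ∀ w : X → ℝ, ∑ z, w z = 0 → ∑ x, ∑ y, v x * G x y * w y = 0 := by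
    intro w hw
    have hQw : 0 ≤ ∑ x, ∑ y, w x * G x y * w y := hcpsd w hw
    set B := ∑ x, ∑ y, v x * G x y * w y with hB_def
    set Qw := ∑ x, ∑ y, w x * G x y * w y with hQw_def
    have hB2 : ∑ x, ∑ y, w x * G x y * v y = B := (dsum_symm G hGsym w v).trans rfl
    have ht : ∀ t : ℝ, 0 ≤ 2 * t * B + t ^ 2 * Qw := by
      intro t
      have hsum : ∑ z, (v z + t * w z) = 0 := by
        rw [Finset.sum_add_distrib, ← Finset.mul_sum, hvsum, hw]
        ring
      have h0 := hcpsd _ hsum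
      rw [dsum_expand G v w t] at h0
      rw [hQv0, hB2] at h0
      linarith
    have h1 := ht (-B / (Qw + 1))
    have hpos : (0:ℝ) < Qw + 1 := by linarith
    have h2 : 0 ≤ (2 * (-B / (Qw + 1)) * B + (-B / (Qw + 1)) ^ 2 * Qw) * (Qw + 1) ^ 2 :=
      mul_nonneg h1 (sq_nonneg _)
    have h3 : (2 * (-B / (Qw + 1)) * B + (-B / (Qw + 1)) ^ 2 * Qw) * (Qw + 1) ^ 2
        = -(B ^ 2 * (Qw + 2)) := by
      field_simp
      ring
    rw [h3] at h2
    have hBsq : B ^ 2 = 0 := by nlinarith [sq_nonneg B]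
    exact pow_eq_zero_iff two_ne_zero |>.mp hBsq
  -- f is constant, where f z = ∑ y, G z y * v y
  have hconst : ∀ a b : X, (∑ y, G a y * v y) = ∑ y, G b y * v y := by
    intro a b
    set w : X → ℝ := fun z => (if z = a then (1:ℝ) else 0) - (if z = b then 1 else 0) with hw_def
    have hwsum : ∑ z, w z = 0 := by
      simp [hw_def, Finset.sum_sub_distrib]
    have hBvw := key w hwsum
    have hcomp : ∑ x, ∑ y, v x * G x y * w y
        = (∑ y, G a y * v y) - (∑ y, G b y * v y) := by
      have hinner : ∀ x, ∑ y, v x * G x y * w y = v x * G x a - v x * G x b := by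
        intro x
        simp [hw_def, mul_sub, Finset.sum_sub_distrib, mul_ite, mul_one, mul_zero]
      rw [Finset.sum_congr rfl fun x _ => hinner x, Finset.sum_sub_distrib]
      congr 1
      · exact Finset.sum_congr rfl fun y _ => by rw [hGsym a y]; ring
      · exact Finset.sum_congr rfl fun y _ => by rw [hGsym b y]; ring
    rw [hcomp] at hBvw
    linarith
  intro x₀
  set k : ℝ := ∑ y, G x₀ y * v y with hk_def
  -- split f z into the two potentials
  have hsplit : ∀ z, (∑ y, G z y * v y)
      = (∑ y, G z y * μ y) - (∑ y, G z y * νs y) := by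
    intro z
    simp [hv_def, mul_sub, Finset.sum_sub_distrib]
  -- pairing with μ
  have hA : ∑ z, μ z * ∑ y, G z y * v y = k := by
    have : ∀ z ∈ Finset.univ, μ z * ∑ y, G z y * v y = μ z * k := by
      intro z _; rw [hconst z x₀]
    rw [Finset.sum_congr rfl this, ← Finset.sum_mul, hμ_sum, one_mul]
  have hA' : ∑ z, μ z * ∑ y, G z y * v y
      = c - ∑ x, ∑ y, νs x * G x y * μ y := by
    have : ∀ z ∈ Finset.univ, μ z * ∑ y, G z y * v y
        = μ z * ∑ y, G z y * μ y - μ z * ∑ y, G z y * νs y := by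
      intro z _; rw [hsplit z]; ring
    rw [Finset.sum_congr rfl this, Finset.sum_sub_distrib, ← dsum_mul, ← dsum_mul, hQμ, hsymm]
  -- pairing with νs
  have hB : ∑ z, νs z * ∑ y, G z y * v y = k := by
    have : ∀ z ∈ Finset.univ, νs z * ∑ y, G z y * v y = νs z * k := by
      intro z _; rw [hconst z x₀]
    rw [Finset.sum_congr rfl this, ← Finset.sum_mul, hνs_sum, one_mul]
  have hB' : ∑ z, νs z * ∑ y, G z y * v y
      = (∑ x, ∑ y, νs x * G x y * μ y) - (∑ x, ∑ y, νs x * G x y * νs y) := by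
    have : ∀ z ∈ Finset.univ, νs z * ∑ y, G z y * v y
        = νs z * ∑ y, G z y * μ y - νs z * ∑ y, G z y * νs y := by
      intro z _; rw [hsplit z]; ring
    rw [Finset.sum_congr rfl this, Finset.sum_sub_distrib, ← dsum_mul, ← dsum_mul]
  -- conclude k = 0
  have hk1 : k = c - ∑ x, ∑ y, νs x * G x y * μ y := by rw [← hA, hA']
  have hk2 : k = (∑ x, ∑ y, νs x * G x y * μ y) - (∑ x, ∑ y, νs x * G x y * νs y) := by
    rw [← hB, hB']
  show k = 0
  linarith
end

section
/- If ν* ∈ P_+ is an equilibrium measure for G (i.e. ν* is a minimizer of G(ν,ν) over P and ν*(x) > 0 for all x), then G(x,ν*) = Γ(G) for every x ∈ X. -/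
/-!
At an equilibrium measure `ν` in the interior of the simplex, every perturbation `ν + t μ` with
`∑ μ = 0` stays a probability measure for small `|t|`, so `t ↦ G(ν + t μ, ν + t μ)` has a local
minimum at `0` and its derivative `2 G(μ, ν)` vanishes there. Taking `μ = δₓ - ν` gives
`G(x, ν) - G(ν, ν) = 0`.
-/

open Finset Filter Topology

section

variable {X : Type*} [Fintype X]

/-- The form `G(μ, ν)` of the statement. -/
def mutualEnergy (G : X → X → ℝ) (μ ν : X → ℝ) : ℝ := ∑ x, ∑ y, μ x * G x y * ν y

variable {G : X → X → ℝ}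

theorem mutualEnergy_comm (hG : ∀ x y, G x y = G y x) (μ ν : X → ℝ) :
    mutualEnergy G μ ν = mutualEnergy G ν μ := by
  unfold mutualEnergy
  rw [sum_comm]
  exact sum_congr rfl fun y _ => sum_congr rfl fun x _ => by rw [hG]; ring

theorem mutualEnergy_sub_left (μ₁ μ₂ ν : X → ℝ) :
    mutualEnergy G (μ₁ - μ₂) ν = mutualEnergy G μ₁ ν - mutualEnergy G μ₂ ν := by
  simp only [mutualEnergy, Pi.sub_apply, sub_mul, sum_sub_distrib]

theorem mutualEnergy_single_left [DecidableEq X] (x : X) (ν : X → ℝ) :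
    mutualEnergy G (Pi.single x 1) ν = ∑ y, G x y * ν y := by
  simp [mutualEnergy, Pi.single_apply]

theorem mutualEnergy_add_smul_self (ν μ : X → ℝ) (t : ℝ) :
    mutualEnergy G (ν + t • μ) (ν + t • μ) = mutualEnergy G ν ν
      + t * (mutualEnergy G ν μ + mutualEnergy G μ ν) + t ^ 2 * mutualEnergy G μ μ := by
  simp only [mutualEnergy, Pi.add_apply, Pi.smul_apply, smul_eq_mul, mul_sum, ← sum_add_distrib]
  exact sum_congr rfl fun x _ => sum_congr rfl fun y _ => by ring

theorem hasDerivAt_mutualEnergy_add_smul_self (ν μ : X → ℝ) :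
    HasDerivAt (fun t : ℝ => mutualEnergy G (ν + t • μ) (ν + t • μ))
      (mutualEnergy G ν μ + mutualEnergy G μ ν) 0 := by
  simp only [mutualEnergy_add_smul_self]
  have h := (((hasDerivAt_id' (0 : ℝ)).mul_const (mutualEnergy G ν μ + mutualEnergy G μ ν)).add
    ((hasDerivAt_pow 2 (0 : ℝ)).mul_const (mutualEnergy G μ μ))).const_add (mutualEnergy G ν ν)
  simpa [add_assoc] using h

theorem eventually_nonneg_add_smul {ν : X → ℝ} (hν : ∀ x, 0 < ν x) (μ : X → ℝ) :
    ∀ᶠ t : ℝ in 𝓝 0, ∀ x, 0 ≤ (ν + t • μ) x := by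
  refine eventually_all.2 fun x => ?_
  have hcont : Continuous fun t : ℝ => ν x + t * μ x := by fun_prop
  filter_upwards [hcont.tendsto 0 |>.eventually (lt_mem_nhds (by simpa using hν x))] with t ht
  exact ht.le

theorem mutualEnergy_add_mutualEnergy_eq_zero_of_isMinOn {ν μ : X → ℝ}
    (hν_pos : ∀ x, 0 < ν x) (hν_sum : ∑ x, ν x = 1)
    (hmin : IsMinOn (fun ρ => mutualEnergy G ρ ρ) (stdSimplex ℝ X) ν) (hμ : ∑ x, μ x = 0) :
    mutualEnergy G ν μ + mutualEnergy G μ ν = 0 := by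
  have hlocal : IsLocalMin (fun t : ℝ => mutualEnergy G (ν + t • μ) (ν + t • μ)) 0 := by
    filter_upwards [eventually_nonneg_add_smul hν_pos μ] with t ht
    simp only [zero_smul, add_zero]
    refine isMinOn_iff.1 hmin _ ⟨ht, ?_⟩
    simp [sum_add_distrib, ← mul_sum, hμ, hν_sum]
  exact hlocal.hasDerivAt_eq_zero (hasDerivAt_mutualEnergy_add_smul_self ν μ)

end

theorem frostman_everywhere_positive_general {X : Type*} [Fintype X]
    (G : X → X → ℝ) (hGsym : ∀ x y, G x y = G y x)
    (νs : X → ℝ) (hνs_pos : ∀ x, 0 < νs x) (hνs_sum : ∑ x, νs x = 1)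
    (hmin : ∀ ν : X → ℝ, (∀ x, 0 ≤ ν x) → ∑ x, ν x = 1 →
      ∑ x, ∑ y, νs x * G x y * νs y ≤ ∑ x, ∑ y, ν x * G x y * ν y) :
    ∀ x : X, ∑ y, G x y * νs y = ∑ x', ∑ y, νs x' * G x' y * νs y := by
  classical
  intro x
  have hvar := mutualEnergy_add_mutualEnergy_eq_zero_of_isMinOn (μ := Pi.single x 1 - νs)
    hνs_pos hνs_sum (isMinOn_iff.2 fun ρ hρ => hmin ρ hρ.1 hρ.2)
    (by simp [sum_sub_distrib, hνs_sum])
  rw [mutualEnergy_comm hGsym νs, ← two_mul, mutualEnergy_sub_left,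
    mutualEnergy_single_left] at hvar
  change _ = mutualEnergy G νs νs
  linarith

/-- If `ν* ∈ P₊` (a probability measure with all values positive) is an
equilibrium measure for the symmetric matrix `G`, then `G(x,ν*) = Γ(G) = G(ν*,ν*)`
for every `x ∈ X`. -/
theorem frostman_everywhere_positive {X : Type*} [Fintype X] [Nonempty X]
    (G : X → X → ℝ) (hGsym : ∀ x y, G x y = G y x)
    (νs : X → ℝ) (hνs_pos : ∀ x, 0 < νs x) (hνs_sum : ∑ x, νs x = 1)
    (hmin : ∀ ν : X → ℝ, (∀ x, 0 ≤ ν x) → ∑ x, ν x = 1 →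
      ∑ x, ∑ y, νs x * G x y * νs y ≤ ∑ x, ∑ y, ν x * G x y * ν y) :
    ∀ x : X, ∑ y, G x y * νs y = ∑ x', ∑ y, νs x' * G x' y * νs y :=
  frostman_everywhere_positive_general G hGsym νs hνs_pos hνs_sum hmin
end

section
/- Let ν* ∈ P_+ be an equilibrium measure for G and let (a_k)_{k≥0} be a Leja sequence for G. Then for every integer n ≥ 1, G(σ_n − ν*, σ_n − ν*) ≤ (1/n)(M(G) − G(ν*,ν*)). -/
open Finset Matrix Filter Topology

/-!
Write `Γ` for the capacity. Since `ν*` is an interior minimiser of the quadratic form `G(ν, ν)`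
on the simplex, its potential `G(x, ν*)` is constant, equal to `Γ`. Consequently
`G(σₙ - ν*, σₙ - ν*) = G(σₙ, σₙ) - Γ`, and for every `k` the Leja choice of `a_k` gives
`∑_{j<k} G(a_k, a_j) ≤ ∑_x ν*(x) ∑_{j<k} G(x, a_j) = k Γ`. Splitting
`n² G(σₙ, σₙ) = ∑_{j,k<n} G(a_j, a_k)` into diagonal and off-diagonal terms yields
`n² G(σₙ, σₙ) ≤ n M(G) + n (n - 1) Γ`, which is the claim.
-/

section DotProduct

variable {X : Type*} [Fintype X]

lemma sum_sum_mul_mul_eq_dotProduct_mulVec {α : Type*} [NonUnitalSemiring α]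
    (G : Matrix X X α) (μ ν : X → α) :
    ∑ x, ∑ y, μ x * G x y * ν y = μ ⬝ᵥ G *ᵥ ν := by
  simp only [dotProduct, mulVec, mul_sum, mul_assoc]

lemma Matrix.IsSymm.dotProduct_mulVec_comm {α : Type*} [CommSemiring α] {G : Matrix X X α}
    (hG : G.IsSymm) (μ ν : X → α) : μ ⬝ᵥ G *ᵥ ν = ν ⬝ᵥ G *ᵥ μ := by
  rw [dotProduct_mulVec, ← mulVec_transpose, hG.eq, dotProduct_comm]

lemma dotProduct_const {α : Type*} [NonUnitalNonAssocSemiring α] (μ : X → α) (c : α) :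
    μ ⬝ᵥ (fun _ => c) = (∑ x, μ x) * c := by
  simp only [dotProduct, sum_mul]

lemma le_dotProduct_of_mem_stdSimplex {μ f : X → ℝ} {c : ℝ} (hμ : μ ∈ stdSimplex ℝ X)
    (hf : ∀ x, c ≤ f x) : c ≤ μ ⬝ᵥ f :=
  calc c = μ ⬝ᵥ fun _ => c := by rw [dotProduct_const, hμ.2, one_mul]
    _ ≤ μ ⬝ᵥ f := dotProduct_le_dotProduct_of_nonneg_left hf hμ.1

end DotProduct

section Equilibrium

variable {X : Type*} [Fintype X] {G : Matrix X X ℝ} {ν : X → ℝ}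

lemma energy_le_mulVec_of_isMinOn (hG : G.IsSymm) (hν : ν ∈ stdSimplex ℝ X)
    (hmin : IsMinOn (fun μ => μ ⬝ᵥ G *ᵥ μ) (stdSimplex ℝ X) ν) (x : X) :
    ν ⬝ᵥ G *ᵥ ν ≤ (G *ᵥ ν) x := by
  classical
  set w := Pi.single x 1 - ν
  set d := (G *ᵥ ν) x - ν ⬝ᵥ G *ᵥ ν
  have hwν : w ⬝ᵥ G *ᵥ ν = d := by simp only [w, d, sub_dotProduct, single_one_dotProduct]
  have hexpand : ∀ t : ℝ, (ν + t • w) ⬝ᵥ G *ᵥ (ν + t • w)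
      = ν ⬝ᵥ G *ᵥ ν + t * (2 * d + t * (w ⬝ᵥ G *ᵥ w)) := by
    intro t
    simp only [mulVec_add, mulVec_smul, add_dotProduct, dotProduct_add, smul_dotProduct,
      dotProduct_smul, smul_eq_mul, hG.dotProduct_mulVec_comm ν w, hwν]
    ring
  have hslope : ∀ t ∈ Set.Ioc (0 : ℝ) 1, 0 ≤ 2 * d + t * (w ⬝ᵥ G *ᵥ w) := by
    intro t ht
    have hmem := (convex_stdSimplex ℝ X).add_smul_sub_mem hν (single_mem_stdSimplex ℝ x)
      (Set.Ioc_subset_Icc_self ht)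
    have := isMinOn_iff.1 hmin (ν + t • w) hmem
    simp only [hexpand, le_add_iff_nonneg_right] at this
    exact nonneg_of_mul_nonneg_right this ht.1
  have hlim : Tendsto (fun t : ℝ => 2 * d + t * (w ⬝ᵥ G *ᵥ w)) (𝓝[>] 0) (𝓝 (2 * d)) :=
    tendsto_nhdsWithin_of_tendsto_nhds <| Continuous.tendsto' (by fun_prop) 0 _ (by simp)
  have := ge_of_tendsto hlim (eventually_of_mem (Ioc_mem_nhdsGT one_pos) hslope)
  linarith

lemma mulVec_eq_energy_of_isMinOn (hG : G.IsSymm) (hν : ν ∈ stdSimplex ℝ X)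
    (hpos : ∀ x, 0 < ν x) (hmin : IsMinOn (fun μ => μ ⬝ᵥ G *ᵥ μ) (stdSimplex ℝ X) ν) :
    G *ᵥ ν = fun _ => ν ⬝ᵥ G *ᵥ ν := by
  set Γ := ν ⬝ᵥ G *ᵥ ν
  have hge := energy_le_mulVec_of_isMinOn hG hν hmin
  have hzero : ∑ y, ν y * ((G *ᵥ ν) y - Γ) = 0 := by
    simp only [mul_sub, sum_sub_distrib, ← sum_mul, hν.2, one_mul]
    exact sub_self Γ
  funext x
  have := (sum_eq_zero_iff_of_nonneg fun y _ =>
    mul_nonneg (hpos y).le (sub_nonneg.2 (hge y))).1 hzero x (mem_univ x)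
  linarith [(mul_eq_zero.1 this).resolve_left (hpos x).ne']

lemma energy_sub_eq_of_mulVec_eq_const (hG : G.IsSymm) {μ : X → ℝ} {Γ : ℝ}
    (hμ : ∑ x, μ x = 1) (hν : ∑ x, ν x = 1) (hpot : G *ᵥ ν = fun _ => Γ) :
    (μ - ν) ⬝ᵥ G *ᵥ (μ - ν) = μ ⬝ᵥ G *ᵥ μ - Γ := by
  rw [mulVec_sub, dotProduct_sub, sub_dotProduct, sub_dotProduct, hG.dotProduct_mulVec_comm ν μ,
    hpot, dotProduct_const, dotProduct_const, hμ, hν]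
  ring

end Equilibrium

lemma sum_range_sum_range_le_of_symm (g : ℕ → ℕ → ℝ) (hg : ∀ j k, g j k = g k j) {M Γ : ℝ}
    (hdiag : ∀ k, g k k ≤ M) (hoff : ∀ k, ∑ j ∈ range k, g k j ≤ k * Γ) (n : ℕ) :
    ∑ j ∈ range n, ∑ k ∈ range n, g j k ≤ n * M + n * (n - 1) * Γ := by
  induction n with
  | zero => simp
  | succ m ih =>
    have hsplit : ∑ j ∈ range (m + 1), ∑ k ∈ range (m + 1), g j k
        = ∑ j ∈ range m, ∑ k ∈ range m, g j k + 2 * ∑ j ∈ range m, g m j + g m m := by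
      simp only [sum_range_succ, sum_add_distrib]
      rw [sum_congr rfl fun j _ => hg j m]
      ring
    rw [hsplit]
    push_cast
    linarith [hdiag m, hoff m]

section Leja

variable {X : Type*} [Fintype X]

def IsLejaSequence (G : Matrix X X ℝ) (a : ℕ → X) : Prop :=
  ∀ k, 1 ≤ k → ∀ x, ∑ j ∈ range k, G (a k) (a j) ≤ ∑ j ∈ range k, G x (a j)

lemma IsLejaSequence.sum_range_le {G : Matrix X X ℝ} {a : ℕ → X} (ha : IsLejaSequence G a)
    (hG : G.IsSymm) {ν : X → ℝ} (hν : ν ∈ stdSimplex ℝ X) {Γ : ℝ}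
    (hpot : G *ᵥ ν = fun _ => Γ) (k : ℕ) :
    ∑ j ∈ range k, G (a k) (a j) ≤ k * Γ := by
  rcases Nat.eq_zero_or_pos k with rfl | hk
  · simp
  calc ∑ j ∈ range k, G (a k) (a j) ≤ ν ⬝ᵥ fun x => ∑ j ∈ range k, G x (a j) :=
        le_dotProduct_of_mem_stdSimplex hν (ha k hk)
    _ = ∑ j ∈ range k, (G *ᵥ ν) (a j) := by
        simp only [dotProduct, mulVec, mul_sum]
        rw [sum_comm]
        exact sum_congr rfl fun j _ => sum_congr rfl fun x _ => by rw [hG.apply]; ring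
    _ = k * Γ := by simp [hpot]

end Leja

section EmpiricalMeasure

variable {X : Type*} [Fintype X] [DecidableEq X]

noncomputable def empiricalMeasure (a : ℕ → X) (n : ℕ) : X → ℝ :=
  fun x => (∑ j ∈ range n, if a j = x then 1 else 0) / n

lemma empiricalMeasure_dotProduct (a : ℕ → X) (n : ℕ) (f : X → ℝ) :
    empiricalMeasure a n ⬝ᵥ f = (∑ j ∈ range n, f (a j)) / n := by
  simp only [empiricalMeasure, dotProduct, div_mul_eq_mul_div, sum_mul, ← sum_div, ite_mul,
    one_mul, zero_mul]
  rw [sum_comm]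
  simp

lemma sum_empiricalMeasure (a : ℕ → X) {n : ℕ} (hn : n ≠ 0) :
    ∑ x, empiricalMeasure a n x = 1 := by
  simpa [dotProduct, hn] using empiricalMeasure_dotProduct a n 1

lemma empiricalMeasure_energy (G : Matrix X X ℝ) (a : ℕ → X) (n : ℕ) :
    empiricalMeasure a n ⬝ᵥ G *ᵥ empiricalMeasure a n
      = (∑ j ∈ range n, ∑ k ∈ range n, G (a j) (a k)) / n ^ 2 := by
  simp only [mulVec, dotProduct_comm (fun _ => G _ _), empiricalMeasure_dotProduct]
  rw [← sum_div, div_div, sq]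

end EmpiricalMeasure

/-- If `ν* ∈ P₊` is an equilibrium measure for `G` and `(a_k)` is a Leja
sequence for `G`, then for every `n ≥ 1`,
`G(σₙ − ν*, σₙ − ν*) ≤ (1/n)(M(G) − G(ν*,ν*))`, where `σₙ` puts mass `1/n` at each of
`a_0,…,a_{n−1}` (with multiplicity) and `M(G) = max_x |G(x,x)|`. -/
theorem leja_energy_convergence {X : Type*} [Fintype X] [Nonempty X] [DecidableEq X]
    (G : X → X → ℝ) (hGsym : ∀ x y, G x y = G y x)
    (νs : X → ℝ) (hνs_pos : ∀ x, 0 < νs x) (hνs_sum : ∑ x, νs x = 1)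
    (hmin : ∀ ν : X → ℝ, (∀ x, 0 ≤ ν x) → ∑ x, ν x = 1 →
      ∑ x, ∑ y, νs x * G x y * νs y ≤ ∑ x, ∑ y, ν x * G x y * ν y)
    (a : ℕ → X)
    (hleja : ∀ k : ℕ, 1 ≤ k → ∀ x : X,
      ∑ j ∈ Finset.range k, G (a k) (a j) ≤ ∑ j ∈ Finset.range k, G x (a j))
    (n : ℕ) (hn : 1 ≤ n) :
    ∑ x, ∑ y,
        ((∑ j ∈ Finset.range n, if a j = x then (1 : ℝ) else 0) / n - νs x) * G x y *
          ((∑ j ∈ Finset.range n, if a j = y then (1 : ℝ) else 0) / n - νs y)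
      ≤ (1 / n) *
        ((Finset.univ.sup' Finset.univ_nonempty fun x => |G x x|) -
          ∑ x, ∑ y, νs x * G x y * νs y) := by
  set M := univ.sup' univ_nonempty fun x => |G x x|
  set σ := empiricalMeasure a n
  have hG : Matrix.IsSymm G := IsSymm.ext fun i j => hGsym j i
  have hνs : νs ∈ stdSimplex ℝ X := ⟨fun x => (hνs_pos x).le, hνs_sum⟩
  have hmin' : IsMinOn (fun μ => μ ⬝ᵥ G *ᵥ μ) (stdSimplex ℝ X) νs := isMinOn_iff.2 fun μ hμ =>
    (sum_sum_mul_mul_eq_dotProduct_mulVec G νs νs).symm.trans_le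
      ((hmin μ hμ.1 hμ.2).trans_eq (sum_sum_mul_mul_eq_dotProduct_mulVec G μ μ))
  have hpot := mulVec_eq_energy_of_isMinOn hG hνs hνs_pos hmin'
  set Γ := νs ⬝ᵥ G *ᵥ νs
  have hdiag (x : X) : G x x ≤ M := (le_abs_self _).trans (le_sup' (fun x => |G x x|) (mem_univ x))
  have hpairs := sum_range_sum_range_le_of_symm (fun j k => G (a j) (a k))
    (fun j k => hGsym _ _) (fun k => hdiag (a k))
    ((show IsLejaSequence G a from hleja).sum_range_le hG hνs hpot) n
  rw [sum_sum_mul_mul_eq_dotProduct_mulVec G νs νs]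
  calc _ = (σ - νs) ⬝ᵥ G *ᵥ (σ - νs) := sum_sum_mul_mul_eq_dotProduct_mulVec _ _ _
    _ = σ ⬝ᵥ G *ᵥ σ - Γ :=
        energy_sub_eq_of_mulVec_eq_const hG (sum_empiricalMeasure a (by omega)) hνs_sum hpot
    _ ≤ (n * M + n * (n - 1) * Γ) / n ^ 2 - Γ :=
        sub_le_sub_right ((empiricalMeasure_energy G a n).trans_le (by gcongr)) Γ
    _ = 1 / n * (M - Γ) := by
        field_simp
        ring
end

section
/- Let B be a symmetric real matrix indexed by X×X, v ∈ P_+, and let B₁ = L_v(B) be the v-Laplacian of B; assume B₁ ≠ 0. Let V = diag(v(x)/‖v‖_∞) and define G = 2|||B₁|||·V^{−1} − B₁. Then for every x ∈ X, G(x,x) − ∑_{y≠x} |G(x,y)| ≥ |||B₁||| > 0; in particular G is strictly diagonally dominant with positive diagonal and hence positive definite, and Gv = 2‖v‖_∞|||B₁|||·𝟏, where 𝟏 is the all-ones vector. -/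
open Finset

/-- Let `B` be symmetric, `v ∈ P₊`, `B₁ = L_v(B)` the `v`-Laplacian with
`B₁ ≠ 0`, `V = diag(v(x)/‖v‖_∞)`, and `G = 2|||B₁|||·V⁻¹ − B₁`. Then for every `x`,
`G(x,x) − ∑_{y≠x} |G(x,y)| ≥ |||B₁||| > 0`; in particular `G` is strictly diagonally
dominant and positive definite, and `Gv = 2‖v‖_∞|||B₁|||·𝟏`. -/
theorem vLaplacian_G_diagonally_dominant {X : Type*} [Fintype X] [Nonempty X] [DecidableEq X]
    (B : X → X → ℝ) (hBsym : ∀ x y, B x y = B y x)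
    (v : X → ℝ) (hv_pos : ∀ x, 0 < v x) (hv_sum : ∑ x, v x = 1)
    (B₁ : X → X → ℝ)
    (hB₁ : ∀ x y, B₁ x y = (if x = y then (∑ z, B x z * v z) / v x else 0) - B x y)
    (hB₁ne : B₁ ≠ 0)
    (G : X → X → ℝ)
    (hG : ∀ x y, G x y =
      2 * (Finset.univ.sup' Finset.univ_nonempty fun z => ∑ y', |B₁ z y'|) *
          (if x = y then (Finset.univ.sup' Finset.univ_nonempty fun z => |v z|) / v x else 0)
        - B₁ x y) :
    (∀ x : X,
        (Finset.univ.sup' Finset.univ_nonempty fun z => ∑ y', |B₁ z y'|)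
          ≤ G x x - ∑ y ∈ Finset.univ.erase x, |G x y|) ∧
      0 < (Finset.univ.sup' Finset.univ_nonempty fun z => ∑ y', |B₁ z y'|) ∧
      (∀ z : X → ℝ, z ≠ 0 → 0 < ∑ x, ∑ y, z x * G x y * z y) ∧
      (∀ x : X, ∑ y, G x y * v y =
        2 * (Finset.univ.sup' Finset.univ_nonempty fun z => |v z|) *
          (Finset.univ.sup' Finset.univ_nonempty fun z => ∑ y', |B₁ z y'|)) := by
  set M := (Finset.univ.sup' Finset.univ_nonempty fun z => ∑ y', |B₁ z y'|) with hM_def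
  set S := (Finset.univ.sup' Finset.univ_nonempty fun z => |v z|) with hS_def
  have hSx : ∀ x, v x ≤ S := fun x =>
    (le_abs_self (v x)).trans (Finset.le_sup' (fun z => |v z|) (mem_univ x))
  have hMx : ∀ x, (∑ y, |B₁ x y|) ≤ M := fun x => Finset.le_sup' (fun z => ∑ y', |B₁ z y'|) (mem_univ x)
  have hMpos : 0 < M := by
    obtain ⟨x, y, hxy⟩ : ∃ x y, B₁ x y ≠ 0 := by
      by_contra h; push_neg at h
      exact hB₁ne (funext fun x => funext fun y => h x y)
    calc (0:ℝ) < |B₁ x y| := abs_pos.2 hxy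
      _ ≤ ∑ y', |B₁ x y'| :=
          Finset.single_le_sum (f := fun y' => |B₁ x y'|) (fun _ _ => abs_nonneg _) (mem_univ y)
      _ ≤ M := hMx x
  have hB₁sym : ∀ x y, B₁ x y = B₁ y x := by
    intro x y
    rcases eq_or_ne x y with h | h
    · rw [h]
    · rw [hB₁, hB₁, if_neg h, if_neg (Ne.symm h), hBsym]
  have hGsym : ∀ x y, G x y = G y x := by
    intro x y
    rcases eq_or_ne x y with h | h
    · rw [h]
    · rw [hG, hG, if_neg h, if_neg (Ne.symm h), hB₁sym]
  -- diagonal dominance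
  have hdd : ∀ x, M ≤ G x x - ∑ y ∈ Finset.univ.erase x, |G x y| := by
    intro x
    have hvx := hv_pos x
    have hGxx : G x x = 2 * M * (S / v x) - B₁ x x := by rw [hG, if_pos rfl]
    have hoff : ∀ y ∈ Finset.univ.erase x, |G x y| = |B₁ x y| := by
      intro y hy
      rw [hG, if_neg (fun h => (Finset.ne_of_mem_erase hy) h.symm), mul_zero, zero_sub, abs_neg]
    have hsum_off : ∑ y ∈ Finset.univ.erase x, |G x y| = (∑ y, |B₁ x y|) - |B₁ x x| := by
      rw [Finset.sum_congr rfl hoff, Finset.sum_erase_eq_sub (mem_univ x)]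
    have ht : (1:ℝ) ≤ S / v x := (one_le_div hvx).2 (hSx x)
    have habs : B₁ x x ≤ |B₁ x x| := le_abs_self _
    have hrowx := hMx x
    rw [hsum_off, hGxx]
    nlinarith [mul_nonneg hMpos.le (sub_nonneg.2 ht)]
  refine ⟨hdd, hMpos, ?_, ?_⟩
  · -- positive definiteness
    intro z hz
    have hzsum : 0 < ∑ x, (z x)^2 := by
      obtain ⟨x, hx⟩ : ∃ x, z x ≠ 0 := by
        by_contra h; push_neg at h; exact hz (funext h)
      exact Finset.sum_pos' (fun _ _ => sq_nonneg _) ⟨x, mem_univ x, by positivity⟩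
    have hswap : (∑ x, ∑ y ∈ Finset.univ.erase x, |G x y| * (z y)^2)
        = ∑ x, ∑ y ∈ Finset.univ.erase x, |G x y| * (z x)^2 := by
      have e1 : ∀ x : X, ∑ y ∈ Finset.univ.erase x, |G x y| * (z y)^2
          = (∑ y, |G x y| * (z y)^2) - |G x x| * (z x)^2 :=
        fun x => Finset.sum_erase_eq_sub (mem_univ x)
      have e2 : ∀ x : X, ∑ y ∈ Finset.univ.erase x, |G x y| * (z x)^2
          = (∑ y, |G x y| * (z x)^2) - |G x x| * (z x)^2 :=
        fun x => Finset.sum_erase_eq_sub (mem_univ x)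
      simp only [e1, e2, Finset.sum_sub_distrib]
      congr 1
      rw [Finset.sum_comm]
      exact Finset.sum_congr rfl fun x _ => Finset.sum_congr rfl fun y _ => by rw [hGsym]
    have step2 : ∀ x, ∀ y ∈ Finset.univ.erase x,
        -(|G x y| * ((z x)^2 + (z y)^2) / 2) ≤ z x * G x y * z y := by
      intro x y _
      nlinarith [mul_nonneg (sub_nonneg.2 (le_abs_self (G x y))) (sq_nonneg (z x - z y)),
        mul_nonneg (by linarith [neg_abs_le (G x y)] : (0:ℝ) ≤ |G x y| + G x y)
          (sq_nonneg (z x + z y))]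
    have hmain : ∀ x, G x x * (z x)^2
        - (∑ y ∈ Finset.univ.erase x, |G x y| * ((z x)^2 + (z y)^2) / 2)
        ≤ ∑ y, z x * G x y * z y := by
      intro x
      rw [← Finset.add_sum_erase univ (fun y => z x * G x y * z y) (mem_univ x)]
      have h2 : ∑ y ∈ Finset.univ.erase x, -(|G x y| * ((z x)^2 + (z y)^2) / 2)
          ≤ ∑ y ∈ Finset.univ.erase x, z x * G x y * z y :=
        Finset.sum_le_sum (step2 x)
      rw [Finset.sum_neg_distrib] at h2
      have hd : z x * G x x * z x = G x x * (z x)^2 := by ring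
      linarith
    have expand : ∀ x, ∑ y ∈ Finset.univ.erase x, |G x y| * ((z x)^2 + (z y)^2) / 2
        = ((∑ y ∈ Finset.univ.erase x, |G x y| * (z x)^2)
            + ∑ y ∈ Finset.univ.erase x, |G x y| * (z y)^2) / 2 := by
      intro x
      rw [← Finset.sum_add_distrib, ← Finset.sum_div]
      congr 1
      exact Finset.sum_congr rfl fun y _ => by ring
    have hsum_eq : (∑ x, ∑ y ∈ Finset.univ.erase x, |G x y| * ((z x)^2 + (z y)^2) / 2)
        = ∑ x, (∑ y ∈ Finset.univ.erase x, |G x y|) * (z x)^2 := by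
      simp only [expand]
      rw [← Finset.sum_div, Finset.sum_add_distrib, hswap]
      rw [show ∀ a : ℝ, (a + a) / 2 = a from fun a => by ring]
      exact Finset.sum_congr rfl fun x _ => by rw [Finset.sum_mul]
    have hQ : ∑ x, (G x x * (z x)^2
          - ∑ y ∈ Finset.univ.erase x, |G x y| * ((z x)^2 + (z y)^2) / 2)
        ≤ ∑ x, ∑ y, z x * G x y * z y :=
      Finset.sum_le_sum fun x _ => hmain x
    have hM1 : M * ∑ x, (z x)^2
        ≤ ∑ x, (G x x - ∑ y ∈ Finset.univ.erase x, |G x y|) * (z x)^2 := by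
      rw [Finset.mul_sum]
      exact Finset.sum_le_sum fun x _ => mul_le_mul_of_nonneg_right (hdd x) (sq_nonneg _)
    have hEq : ∑ x, (G x x - ∑ y ∈ Finset.univ.erase x, |G x y|) * (z x)^2
        = ∑ x, (G x x * (z x)^2
          - ∑ y ∈ Finset.univ.erase x, |G x y| * ((z x)^2 + (z y)^2) / 2) := by
      simp only [sub_mul]
      rw [Finset.sum_sub_distrib, Finset.sum_sub_distrib, hsum_eq]
    have : 0 < M * ∑ x, (z x)^2 := mul_pos hMpos hzsum
    linarith
  · -- row sums against v
    have hrow : ∀ x, ∑ y, B₁ x y * v y = 0 := by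
      intro x
      have e : ∀ y, B₁ x y * v y
          = (if x = y then ((∑ z, B x z * v z) / v x) * v y else 0) - B x y * v y := by
        intro y
        rw [hB₁, sub_mul, ite_mul, zero_mul]
      rw [Finset.sum_congr rfl fun y _ => e y, Finset.sum_sub_distrib, Finset.sum_ite_eq,
        if_pos (mem_univ x), div_mul_cancel₀ _ (hv_pos x).ne', sub_self]
    intro x
    have e : ∀ y, G x y * v y
        = (if x = y then 2 * M * (S / v x) * v y else 0) - B₁ x y * v y := by
      intro y
      rw [hG, sub_mul, mul_ite, mul_zero, ite_mul, zero_mul]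
    rw [Finset.sum_congr rfl fun y _ => e y, Finset.sum_sub_distrib, hrow x, sub_zero,
      Finset.sum_ite_eq, if_pos (mem_univ x)]
    field_simp [(hv_pos x).ne']
end

section
/- Let B be a symmetric real matrix indexed by X×X, v ∈ P_+, B₁ = L_v(B) the v-Laplacian with B₁ ≠ 0, V = diag(v(x)/‖v‖_∞), and G = 2|||B₁|||·V^{−1} − B₁. Then v is the unique equilibrium measure of G and Γ(G) = 2‖v‖_∞|||B₁|||; that is, G(v,v) = 2‖v‖_∞|||B₁||| ≤ G(ν,ν) for every probability measure ν on X, with equality only for ν = v. -/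
open Finset

/-- Let `B` be symmetric, `v ∈ P₊`, `B₁ = L_v(B)` the `v`-Laplacian with
`B₁ ≠ 0`, `V = diag(v(x)/‖v‖_∞)`, and `G = 2|||B₁|||·V⁻¹ − B₁`. Then `v` is the unique
equilibrium measure of `G` with `Γ(G) = 2‖v‖_∞|||B₁|||`: the energy of `v` equals
`2‖v‖_∞|||B₁|||`, which is `≤ G(ν,ν)` for every probability measure `ν`, with equality
only for `ν = v`. -/
theorem vLaplacian_G_equilibrium {X : Type*} [Fintype X] [Nonempty X] [DecidableEq X]
    (B : X → X → ℝ) (hBsym : ∀ x y, B x y = B y x)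
    (v : X → ℝ) (hv_pos : ∀ x, 0 < v x) (hv_sum : ∑ x, v x = 1)
    (B₁ : X → X → ℝ)
    (hB₁ : ∀ x y, B₁ x y = (if x = y then (∑ z, B x z * v z) / v x else 0) - B x y)
    (hB₁ne : B₁ ≠ 0)
    (G : X → X → ℝ)
    (hG : ∀ x y, G x y =
      2 * (Finset.univ.sup' Finset.univ_nonempty fun z => ∑ y', |B₁ z y'|) *
          (if x = y then (Finset.univ.sup' Finset.univ_nonempty fun z => |v z|) / v x else 0)
        - B₁ x y) :
    (∑ x, ∑ y, v x * G x y * v y =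
        2 * (Finset.univ.sup' Finset.univ_nonempty fun z => |v z|) *
          (Finset.univ.sup' Finset.univ_nonempty fun z => ∑ y', |B₁ z y'|)) ∧
      (∀ ν : X → ℝ, (∀ x, 0 ≤ ν x) → ∑ x, ν x = 1 →
        (2 * (Finset.univ.sup' Finset.univ_nonempty fun z => |v z|) *
            (Finset.univ.sup' Finset.univ_nonempty fun z => ∑ y', |B₁ z y'|)
          ≤ ∑ x, ∑ y, ν x * G x y * ν y) ∧
        (∑ x, ∑ y, ν x * G x y * ν y =
            2 * (Finset.univ.sup' Finset.univ_nonempty fun z => |v z|) *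
              (Finset.univ.sup' Finset.univ_nonempty fun z => ∑ y', |B₁ z y'|)
          → ν = v)) := by
  set s : ℝ := Finset.univ.sup' Finset.univ_nonempty fun z => |v z| with hs_def
  set M : ℝ := Finset.univ.sup' Finset.univ_nonempty fun z => ∑ y', |B₁ z y'| with hM_def
  have hvne : ∀ x, v x ≠ 0 := fun x => (hv_pos x).ne'
  have hvs : ∀ x, v x ≤ s := fun x =>
    (le_abs_self _).trans (Finset.le_sup' (fun z => |v z|) (mem_univ x))
  have hs_pos : 0 < s := lt_of_lt_of_le (hv_pos (Classical.arbitrary X)) (hvs _)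
  have hrowabs : ∀ x, ∑ y, |B₁ x y| ≤ M := fun x =>
    Finset.le_sup' (fun z => ∑ y', |B₁ z y'|) (mem_univ x)
  clear_value s M
  have hMpos : 0 < M := by
    obtain ⟨x, hx⟩ := Function.ne_iff.mp hB₁ne
    obtain ⟨y, hy⟩ := Function.ne_iff.mp hx
    have h1 : 0 < |B₁ x y| := abs_pos.mpr hy
    have h2 : |B₁ x y| ≤ ∑ y', |B₁ x y'| :=
      Finset.single_le_sum (f := fun y' => |B₁ x y'|) (fun _ _ => abs_nonneg _) (mem_univ y)
    linarith [hrowabs x]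
  have hB₁sym : ∀ x y, B₁ x y = B₁ y x := by
    intro x y
    rcases eq_or_ne x y with h | h
    · rw [h]
    · rw [hB₁ x y, hB₁ y x, if_neg h, if_neg (Ne.symm h), hBsym x y]
  have hrow : ∀ x, ∑ y, B₁ x y * v y = 0 := by
    intro x
    simp only [hB₁, sub_mul, Finset.sum_sub_distrib, ite_mul, zero_mul]
    rw [Finset.sum_ite_eq univ x (fun y => (∑ z, B x z * v z) / v x * v y)]
    simp only [mem_univ, if_true]
    rw [div_mul_cancel₀ _ (hvne x)]
    ring
  have hcol : ∀ y, ∑ x, v x * B₁ x y = 0 := by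
    intro y
    rw [← hrow y]
    exact Finset.sum_congr rfl fun x _ => by rw [hB₁sym x y, mul_comm]
  have hvBu : ∀ u : X → ℝ, ∑ x, ∑ y, v x * B₁ x y * u y = 0 := by
    intro u
    rw [Finset.sum_comm]
    refine Finset.sum_eq_zero fun y _ => ?_
    rw [← Finset.sum_mul, hcol y, zero_mul]
  have huBv : ∀ u : X → ℝ, ∑ x, ∑ y, u x * B₁ x y * v y = 0 := by
    intro u
    refine Finset.sum_eq_zero fun x _ => ?_
    simp only [mul_assoc, ← Finset.mul_sum, hrow x, mul_zero]
  have hE : ∀ ν : X → ℝ, ∑ x, ∑ y, ν x * G x y * ν y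
      = 2 * M * s * (∑ x, ν x ^ 2 / v x) - ∑ x, ∑ y, ν x * B₁ x y * ν y := by
    intro ν
    have h1 : ∀ x, ∑ y, ν x * G x y * ν y
        = 2 * M * s * (ν x ^ 2 / v x) - ∑ y, ν x * B₁ x y * ν y := by
      intro x
      simp only [hG, mul_sub, sub_mul, Finset.sum_sub_distrib]
      congr 1
      simp only [mul_ite, mul_zero, ite_mul, zero_mul]
      rw [Finset.sum_ite_eq univ x (fun y => ν x * (2 * M * (s / v x)) * ν y)]
      simp only [mem_univ, if_true]
      field_simp
    rw [Finset.sum_congr rfl fun x _ => h1 x, Finset.sum_sub_distrib, ← Finset.mul_sum]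
  refine ⟨?_, ?_⟩
  · rw [hE v, huBv v]
    have h2 : ∀ x, v x ^ 2 / v x = v x := fun x => by
      rw [sq, mul_div_assoc, div_self (hvne x), mul_one]
    rw [Finset.sum_congr rfl fun x _ => h2 x, hv_sum]
    ring
  · intro ν hν0 hν1
    set w : X → ℝ := fun x => ν x - v x with hw_def
    have hwsum : ∑ x, w x = 0 := by
      simp only [hw_def, Finset.sum_sub_distrib, hν1, hv_sum, sub_self]
    clear_value w
    have hQ : ∑ x, ∑ y, ν x * B₁ x y * ν y = ∑ x, ∑ y, w x * B₁ x y * w y := by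
      have key : ∀ x y, ν x * B₁ x y * ν y
          = w x * B₁ x y * w y + (v x * B₁ x y * ν y + w x * B₁ x y * v y) := by
        intro x y; simp only [hw_def]; ring
      calc ∑ x, ∑ y, ν x * B₁ x y * ν y
          = ∑ x, ∑ y, (w x * B₁ x y * w y + (v x * B₁ x y * ν y + w x * B₁ x y * v y)) :=
            Finset.sum_congr rfl fun x _ => Finset.sum_congr rfl fun y _ => key x y
        _ = (∑ x, ∑ y, w x * B₁ x y * w y) + ((∑ x, ∑ y, v x * B₁ x y * ν y)
              + ∑ x, ∑ y, w x * B₁ x y * v y) := by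
            simp only [Finset.sum_add_distrib]
        _ = ∑ x, ∑ y, w x * B₁ x y * w y := by rw [hvBu ν, huBv w]; ring
    have hQle : ∑ x, ∑ y, w x * B₁ x y * w y ≤ M * ∑ x, (w x) ^ 2 := by
      have step1 : ∑ x, ∑ y, w x * B₁ x y * w y
          ≤ ∑ x, ∑ y, (|B₁ x y| * (w x) ^ 2 / 2 + |B₁ x y| * (w y) ^ 2 / 2) := by
        refine Finset.sum_le_sum fun x _ => Finset.sum_le_sum fun y _ => ?_
        have h1 : w x * B₁ x y * w y ≤ |w x| * |B₁ x y| * |w y| := by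
          calc w x * B₁ x y * w y ≤ |w x * B₁ x y * w y| := le_abs_self _
            _ = |w x| * |B₁ x y| * |w y| := by rw [abs_mul, abs_mul]
        have h2 : |w x| * |w y| ≤ (w x ^ 2 + w y ^ 2) / 2 := by
          have ht := two_mul_le_add_sq |w x| |w y|
          rw [sq_abs, sq_abs] at ht
          linarith
        have h3 : |w x| * |B₁ x y| * |w y| = |B₁ x y| * (|w x| * |w y|) := by ring
        have h5 := mul_le_mul_of_nonneg_left h2 (abs_nonneg (B₁ x y))
        have h4 : |B₁ x y| * ((w x ^ 2 + w y ^ 2) / 2)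
            = |B₁ x y| * w x ^ 2 / 2 + |B₁ x y| * w y ^ 2 / 2 := by ring
        calc w x * B₁ x y * w y ≤ |w x| * |B₁ x y| * |w y| := h1
          _ = |B₁ x y| * (|w x| * |w y|) := h3
          _ ≤ |B₁ x y| * ((w x ^ 2 + w y ^ 2) / 2) := h5
          _ = |B₁ x y| * w x ^ 2 / 2 + |B₁ x y| * w y ^ 2 / 2 := h4
      have step3 : ∑ x, ∑ y, |B₁ x y| * (w x) ^ 2 ≤ M * ∑ x, (w x) ^ 2 := by
        calc ∑ x, ∑ y, |B₁ x y| * (w x) ^ 2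
            = ∑ x, (∑ y, |B₁ x y|) * (w x) ^ 2 :=
              Finset.sum_congr rfl fun x _ => by rw [Finset.sum_mul]
          _
            ≤ ∑ x, M * (w x) ^ 2 := Finset.sum_le_sum fun x _ =>
              mul_le_mul_of_nonneg_right (hrowabs x) (sq_nonneg _)
          _ = M * ∑ x, (w x) ^ 2 := by rw [Finset.mul_sum]
      have step4 : ∑ x, ∑ y, |B₁ x y| * (w y) ^ 2 ≤ M * ∑ x, (w x) ^ 2 := by
        rw [Finset.sum_comm]
        calc ∑ y, ∑ x, |B₁ x y| * (w y) ^ 2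
            = ∑ y, ∑ x, |B₁ y x| * (w y) ^ 2 := by
              exact Finset.sum_congr rfl fun y _ => Finset.sum_congr rfl fun x _ => by
                rw [hB₁sym x y]
          _ ≤ M * ∑ y, (w y) ^ 2 := by
              calc ∑ y, ∑ x, |B₁ y x| * (w y) ^ 2
                  = ∑ y, (∑ x, |B₁ y x|) * (w y) ^ 2 := by
                    exact Finset.sum_congr rfl fun y _ => by rw [Finset.sum_mul]
                _ ≤ ∑ y, M * (w y) ^ 2 := Finset.sum_le_sum fun y _ =>
                    mul_le_mul_of_nonneg_right (hrowabs y) (sq_nonneg _)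
                _ = M * ∑ y, (w y) ^ 2 := by rw [Finset.mul_sum]
      have step2 : ∑ x, ∑ y, (|B₁ x y| * (w x) ^ 2 / 2 + |B₁ x y| * (w y) ^ 2 / 2)
          = ((∑ x, ∑ y, |B₁ x y| * (w x) ^ 2) + ∑ x, ∑ y, |B₁ x y| * (w y) ^ 2) / 2 := by
        simp only [Finset.sum_add_distrib, ← Finset.sum_div]
        ring
      rw [step2] at step1
      linarith
    have hdiv : 1 + (∑ x, (w x) ^ 2) / s ≤ ∑ x, ν x ^ 2 / v x := by
      have h1 : ∀ x, ν x ^ 2 / v x = w x ^ 2 / v x + 2 * w x + v x := by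
        intro x
        have hx : ν x = w x + v x := by simp only [hw_def]; ring
        rw [hx]
        field_simp [hvne x]
        ring
      rw [Finset.sum_congr rfl fun x _ => h1 x]
      simp only [Finset.sum_add_distrib, ← Finset.mul_sum, hwsum, hv_sum, mul_zero]
      have h2 : (∑ x, (w x) ^ 2) / s ≤ ∑ x, w x ^ 2 / v x := by
        rw [Finset.sum_div]
        refine Finset.sum_le_sum fun x _ => ?_
        exact div_le_div_of_nonneg_left (sq_nonneg _) (hv_pos x) (hvs x)
      linarith
    have hlower : 2 * s * M + M * ∑ x, (w x) ^ 2 ≤ ∑ x, ∑ y, ν x * G x y * ν y := by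
      rw [hE ν, hQ]
      have h3 : 2 * M * s * (1 + (∑ x, (w x) ^ 2) / s) ≤ 2 * M * s * ∑ x, ν x ^ 2 / v x :=
        mul_le_mul_of_nonneg_left hdiv (by positivity)
      have h4 : 2 * M * s * (1 + (∑ x, (w x) ^ 2) / s)
          = 2 * s * M + 2 * M * ∑ x, (w x) ^ 2 := by
        field_simp
      linarith
    have hw2 : 0 ≤ ∑ x, (w x) ^ 2 := Finset.sum_nonneg fun x _ => sq_nonneg _
    refine ⟨by nlinarith, fun heq => ?_⟩
    have hzero : ∑ x, (w x) ^ 2 = 0 := by nlinarith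
    funext x
    have := (Finset.sum_eq_zero_iff_of_nonneg fun x _ => sq_nonneg (w x)).mp hzero x (mem_univ x)
    have : w x = 0 := by nlinarith [sq_nonneg (w x)]
    simp only [hw_def] at this
    exact sub_eq_zero.mp this
end
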